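/- Let (L,α) be a Hom-Lie-Yamaguti superalgebra. Then the centroid C(L) is closed under the supercommutator, hence a subalgebra of End(L). -/
import Mathlib


noncomputable section

/-- The Koszul sign `(-1)^{ij}` for parities `i j : ZMod 2`. -/
def sg (K : Type*) [Field K] (i j : ZMod 2) : K := (-1 : K) ^ (i.val * j.val)

/-- The underlying data of a Hom-Lie–Yamaguti superalgebra: a `ZMod 2`-grading,
a binary bracket, a ternary bracket and a twisting map `α`. -/
structure HLYSData (K : Type*) [Field K] (L : Type*) [AddCommGroup L] [Module K L] where
  grade : ZMod 2 → Submodule K L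
  br : L →ₗ[K] L →ₗ[K] L
  tr : L →ₗ[K] L →ₗ[K] L →ₗ[K] L
  α : L →ₗ[K] L

namespace HLYSData

variable {K : Type*} [Field K] {L : Type*} [AddCommGroup L] [Module K L]

/-- The iterate `α^k` of the structure map. -/
def pα (A : HLYSData K L) : ℕ → (L →ₗ[K] L)
  | 0 => LinearMap.id
  | n + 1 => A.α ∘ₗ A.pα n

/-- Axioms (SHLY1)–(SHLY8) of a Hom-Lie–Yamaguti superalgebra, stated on
homogeneous elements. -/
structure IsHLYS (A : HLYSData K L) : Prop where
  grade_α : ∀ i x, x ∈ A.grade i → A.α x ∈ A.grade i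
  grade_br : ∀ i j x y, x ∈ A.grade i → y ∈ A.grade j → A.br x y ∈ A.grade (i + j)
  grade_tr : ∀ i j m x y z, x ∈ A.grade i → y ∈ A.grade j → z ∈ A.grade m →
    A.tr x y z ∈ A.grade (i + j + m)
  shly1 : ∀ x y, A.α (A.br x y) = A.br (A.α x) (A.α y)
  shly2 : ∀ x y z, A.α (A.tr x y z) = A.tr (A.α x) (A.α y) (A.α z)
  shly3 : ∀ i j x y, x ∈ A.grade i → y ∈ A.grade j → A.br x y = -(sg K i j • A.br y x)
  shly4 : ∀ i j x y z, x ∈ A.grade i → y ∈ A.grade j → A.tr x y z = -(sg K i j • A.tr y x z)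
  shly5 : ∀ i j m x y z, x ∈ A.grade i → y ∈ A.grade j → z ∈ A.grade m →
    sg K i m • (A.br (A.br x y) (A.α z) + A.tr x y z)
      + sg K j i • (A.br (A.br y z) (A.α x) + A.tr y z x)
      + sg K m j • (A.br (A.br z x) (A.α y) + A.tr z x y) = 0
  shly6 : ∀ i j m n x y z u, x ∈ A.grade i → y ∈ A.grade j → z ∈ A.grade m → u ∈ A.grade n →
    sg K i m • A.tr (A.br x y) (A.α z) (A.α u)
      + sg K j i • A.tr (A.br y z) (A.α x) (A.α u)
      + sg K m j • A.tr (A.br z x) (A.α y) (A.α u) = 0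
  shly7 : ∀ i j m n x y u v, x ∈ A.grade i → y ∈ A.grade j → u ∈ A.grade m → v ∈ A.grade n →
    A.tr (A.α x) (A.α y) (A.br u v)
      = A.br (A.tr x y u) (A.α (A.α v))
        + sg K m (i + j) • A.br (A.α (A.α u)) (A.tr x y v)
  shly8 : ∀ i j m n p x y u v w, x ∈ A.grade i → y ∈ A.grade j → u ∈ A.grade m →
      v ∈ A.grade n → w ∈ A.grade p →
    A.tr (A.α (A.α x)) (A.α (A.α y)) (A.tr u v w)
      = A.tr (A.tr x y u) (A.α (A.α v)) (A.α (A.α w))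
        + sg K m (i + j) • A.tr (A.α (A.α u)) (A.tr x y v) (A.α (A.α w))
        + sg K (m + n) (i + j) • A.tr (A.α (A.α u)) (A.α (A.α v)) (A.tr x y w)

/-- `D` is a homogeneous linear map of degree `s`. -/
def IsHomog (A : HLYSData K L) (s : ZMod 2) (D : L →ₗ[K] L) : Prop :=
  ∀ i x, x ∈ A.grade i → D x ∈ A.grade (i + s)

/-- Homogeneous `α^k`-derivations of degree `s`. -/
def IsDer (A : HLYSData K L) (k : ℕ) (s : ZMod 2) (D : L →ₗ[K] L) : Prop :=
  A.IsHomog s D ∧ (∀ x, D (A.α x) = A.α (D x)) ∧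
  (∀ i j x y, x ∈ A.grade i → y ∈ A.grade j →
    D (A.br x y) = A.br (D x) (A.pα k y) + sg K s i • A.br (A.pα k x) (D y)) ∧
  (∀ i j m x y z, x ∈ A.grade i → y ∈ A.grade j → z ∈ A.grade m →
    D (A.tr x y z)
      = A.tr (D x) (A.pα k y) (A.pα k z)
        + sg K s i • A.tr (A.pα k x) (D y) (A.pα k z)
        + sg K s (i + j) • A.tr (A.pα k x) (A.pα k y) (D z))

/-- Homogeneous generalized `α^k`-derivations of degree `s`. -/
def IsGDer (A : HLYSData K L) (k : ℕ) (s : ZMod 2) (D : L →ₗ[K] L) : Prop :=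
  A.IsHomog s D ∧ ∃ D' D'' D''' : L →ₗ[K] L,
    A.IsHomog s D' ∧ A.IsHomog s D'' ∧ A.IsHomog s D''' ∧
    (∀ i j x y, x ∈ A.grade i → y ∈ A.grade j →
      A.br (D x) (A.pα k y) + sg K s i • A.br (A.pα k x) (D' y) = D'' (A.br x y)) ∧
    (∀ i j m x y z, x ∈ A.grade i → y ∈ A.grade j → z ∈ A.grade m →
      A.tr (D x) (A.pα k y) (A.pα k z)
          + sg K s i • A.tr (A.pα k x) (D' y) (A.pα k z)
          + sg K s (i + j) • A.tr (A.pα k x) (A.pα k y) (D'' z) = D''' (A.tr x y z))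

/-- Homogeneous `α^k`-quasiderivations of degree `s`. -/
def IsQDer (A : HLYSData K L) (k : ℕ) (s : ZMod 2) (D : L →ₗ[K] L) : Prop :=
  A.IsHomog s D ∧ ∃ D' D'' : L →ₗ[K] L, A.IsHomog s D' ∧ A.IsHomog s D'' ∧
    (∀ i j x y, x ∈ A.grade i → y ∈ A.grade j →
      A.br (D x) (A.pα k y) + sg K s i • A.br (A.pα k x) (D y) = D' (A.br x y)) ∧
    (∀ i j m x y z, x ∈ A.grade i → y ∈ A.grade j → z ∈ A.grade m →
      A.tr (D x) (A.pα k y) (A.pα k z)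
          + sg K s i • A.tr (A.pα k x) (D y) (A.pα k z)
          + sg K s (i + j) • A.tr (A.pα k x) (A.pα k y) (D z) = D'' (A.tr x y z))

/-- The `α^k`-centroid (homogeneous elements of degree `s`). -/
def IsCent (A : HLYSData K L) (k : ℕ) (s : ZMod 2) (D : L →ₗ[K] L) : Prop :=
  A.IsHomog s D ∧
  (∀ i j x y, x ∈ A.grade i → y ∈ A.grade j →
    A.br (D x) (A.pα k y) = D (A.br x y) ∧
    sg K s i • A.br (A.pα k x) (D y) = D (A.br x y)) ∧
  (∀ i j m x y z, x ∈ A.grade i → y ∈ A.grade j → z ∈ A.grade m →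
    A.tr (D x) (A.pα k y) (A.pα k z) = D (A.tr x y z) ∧
    sg K s i • A.tr (A.pα k x) (D y) (A.pα k z) = D (A.tr x y z) ∧
    sg K s (i + j) • A.tr (A.pα k x) (A.pα k y) (D z) = D (A.tr x y z))

/-- The `α^k`-quasicentroid (homogeneous elements of degree `s`). -/
def IsQCent (A : HLYSData K L) (k : ℕ) (s : ZMod 2) (D : L →ₗ[K] L) : Prop :=
  A.IsHomog s D ∧
  (∀ i j x y, x ∈ A.grade i → y ∈ A.grade j →
    A.br (D x) (A.pα k y) = sg K s i • A.br (A.pα k x) (D y)) ∧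
  (∀ i j m x y z, x ∈ A.grade i → y ∈ A.grade j → z ∈ A.grade m →
    A.tr (D x) (A.pα k y) (A.pα k z) = sg K s i • A.tr (A.pα k x) (D y) (A.pα k z) ∧
    A.tr (D x) (A.pα k y) (A.pα k z) = sg K s (i + j) • A.tr (A.pα k x) (A.pα k y) (D z))

/-- Central derivations (with twist `α^k`, degree `s`). -/
def IsZDer (A : HLYSData K L) (k : ℕ) (s : ZMod 2) (D : L →ₗ[K] L) : Prop :=
  A.IsHomog s D ∧ (∀ x, D (A.α x) = A.α (D x)) ∧
  (∀ x y, A.br (D x) (A.pα k y) = 0) ∧ (∀ x y, D (A.br x y) = 0) ∧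
  (∀ x y z, A.tr (D x) (A.pα k y) (A.pα k z) = 0) ∧ (∀ x y z, D (A.tr x y z) = 0)

/-- The center `Z(L)`. -/
def center (A : HLYSData K L) : Set L :=
  {x | ∀ y z, A.br x y = 0 ∧ A.tr x y z = 0}

end HLYSData

/-- The supercommutator of two endomorphisms of parities `a` and `b`. -/
def scomm (K : Type*) [Field K] {L : Type*} [AddCommGroup L] [Module K L]
    (a b : ZMod 2) (f g : L →ₗ[K] L) : L →ₗ[K] L :=
  f ∘ₗ g - sg K a b • (g ∘ₗ f)

namespace HLYSData

variable {K : Type*} [Field K] {L : Type*} [AddCommGroup L] [Module K L]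

lemma pα_add (A : HLYSData K L) (m n : ℕ) (x : L) :
    A.pα (m + n) x = A.pα m (A.pα n x) := by
  induction m with
  | zero => simp [pα]
  | succ m ih => simp only [show m + 1 + n = (m + n) + 1 from by omega, pα,
      LinearMap.coe_comp, Function.comp_apply, ih]

lemma grade_pα (A : HLYSData K L) (hA : A.IsHLYS) (n : ℕ) {i : ZMod 2} {x : L}
    (hx : x ∈ A.grade i) : A.pα n x ∈ A.grade i := by
  induction n with
  | zero => simpa [pα] using hx
  | succ n ih => exact hA.grade_α i _ ih

end HLYSData

lemma sg_add (K : Type*) [Field K] (i j m : ZMod 2) :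
    sg K (i + j) m = sg K i m * sg K j m := by
  have h : ((i + j).val * m.val) % 2 = (i.val * m.val + j.val * m.val) % 2 := by
    revert i j m; decide
  rw [sg, sg, sg, ← pow_add, neg_one_pow_eq_pow_mod_two, h, ← neg_one_pow_eq_pow_mod_two]

/-- the centroid `C(L)` is closed under the supercommutator. -/
theorem centroid_closed_under_scomm
    {K : Type*} [Field K] {L : Type*} [AddCommGroup L] [Module K L]
    (A : HLYSData K L) (hA : A.IsHLYS)
    (k s : ℕ) (a b : ZMod 2) (D₁ D₂ : L →ₗ[K] L)
    (h₁ : A.IsCent k a D₁) (h₂ : A.IsCent s b D₂) :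
    A.IsCent (k + s) (a + b) (scomm K a b D₁ D₂) := by
  have hks : ∀ w : L, A.pα (k + s) w = A.pα k (A.pα s w) := fun w => A.pα_add k s w
  have hsk : ∀ w : L, A.pα (k + s) w = A.pα s (A.pα k w) := fun w => by
    rw [add_comm]; exact A.pα_add s k w
  refine ⟨?_, fun i j x y hx hy => ?_, fun i j m x y z hx hy hz => ?_⟩
  · intro i x hx
    have m1 : D₁ (D₂ x) ∈ A.grade (i + b + a) := h₁.1 _ _ (h₂.1 i x hx)
    have m2 : D₂ (D₁ x) ∈ A.grade (i + a + b) := h₂.1 _ _ (h₁.1 i x hx)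
    have e1 : i + b + a = i + (a + b) := by ring
    have e2 : i + a + b = i + (a + b) := by ring
    rw [e1] at m1; rw [e2] at m2
    simp only [scomm, LinearMap.sub_apply, LinearMap.smul_apply, LinearMap.coe_comp,
      Function.comp_apply]
    exact Submodule.sub_mem _ m1 (Submodule.smul_mem _ _ m2)
  · have hxs : A.pα s x ∈ A.grade i := A.grade_pα hA s hx
    have hxk : A.pα k x ∈ A.grade i := A.grade_pα hA k hx
    have hys : A.pα s y ∈ A.grade j := A.grade_pα hA s hy
    have hyk : A.pα k y ∈ A.grade j := A.grade_pα hA k hy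
    constructor
    · have e1 : A.br (D₁ (D₂ x)) (A.pα (k + s) y) = D₁ (D₂ (A.br x y)) := by
        rw [hks y, (h₁.2.1 (i + b) j _ _ (h₂.1 i x hx) hys).1, (h₂.2.1 i j x y hx hy).1]
      have e2 : A.br (D₂ (D₁ x)) (A.pα (k + s) y) = D₂ (D₁ (A.br x y)) := by
        rw [hsk y, (h₂.2.1 (i + a) j _ _ (h₁.1 i x hx) hyk).1, (h₁.2.1 i j x y hx hy).1]
      simp only [scomm, LinearMap.sub_apply, LinearMap.smul_apply, LinearMap.coe_comp,
        Function.comp_apply, map_sub, map_smul, LinearMap.sub_apply, LinearMap.smul_apply]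
      rw [e1, e2]
    · have e1 : sg K (a + b) i • A.br (A.pα (k + s) x) (D₁ (D₂ y)) = D₁ (D₂ (A.br x y)) := by
        rw [hks x, sg_add, mul_comm (sg K a i) (sg K b i), mul_smul,
          (h₁.2.1 i (j + b) _ _ hxs (h₂.1 j y hy)).2, ← map_smul,
          (h₂.2.1 i j x y hx hy).2]
      have e2 : sg K (a + b) i • A.br (A.pα (k + s) x) (D₂ (D₁ y)) = D₂ (D₁ (A.br x y)) := by
        rw [hsk x, sg_add, mul_smul,
          (h₂.2.1 i (j + a) _ _ hxk (h₁.1 j y hy)).2, ← map_smul,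
          (h₁.2.1 i j x y hx hy).2]
      simp only [scomm, LinearMap.sub_apply, LinearMap.smul_apply, LinearMap.coe_comp,
        Function.comp_apply, map_sub, map_smul, smul_sub]
      rw [smul_comm (sg K (a + b) i) (sg K a b), e1, e2]
  · have hxs : A.pα s x ∈ A.grade i := A.grade_pα hA s hx
    have hxk : A.pα k x ∈ A.grade i := A.grade_pα hA k hx
    have hys : A.pα s y ∈ A.grade j := A.grade_pα hA s hy
    have hyk : A.pα k y ∈ A.grade j := A.grade_pα hA k hy
    have hzs : A.pα s z ∈ A.grade m := A.grade_pα hA s hz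
    have hzk : A.pα k z ∈ A.grade m := A.grade_pα hA k hz
    refine ⟨?_, ?_, ?_⟩
    · have e1 : A.tr (D₁ (D₂ x)) (A.pα (k + s) y) (A.pα (k + s) z)
          = D₁ (D₂ (A.tr x y z)) := by
        rw [hks y, hks z, (h₁.2.2 (i + b) j m _ _ _ (h₂.1 i x hx) hys hzs).1,
          (h₂.2.2 i j m x y z hx hy hz).1]
      have e2 : A.tr (D₂ (D₁ x)) (A.pα (k + s) y) (A.pα (k + s) z)
          = D₂ (D₁ (A.tr x y z)) := by
        rw [hsk y, hsk z, (h₂.2.2 (i + a) j m _ _ _ (h₁.1 i x hx) hyk hzk).1,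
          (h₁.2.2 i j m x y z hx hy hz).1]
      simp only [scomm, LinearMap.sub_apply, LinearMap.smul_apply, LinearMap.coe_comp,
        Function.comp_apply, map_sub, map_smul, LinearMap.sub_apply, LinearMap.smul_apply]
      rw [e1, e2]
    · have e1 : sg K (a + b) i • A.tr (A.pα (k + s) x) (D₁ (D₂ y)) (A.pα (k + s) z)
          = D₁ (D₂ (A.tr x y z)) := by
        rw [hks x, hks z, sg_add, mul_comm (sg K a i) (sg K b i), mul_smul,
          (h₁.2.2 i (j + b) m _ _ _ hxs (h₂.1 j y hy) hzs).2.1, ← map_smul,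
          (h₂.2.2 i j m x y z hx hy hz).2.1]
      have e2 : sg K (a + b) i • A.tr (A.pα (k + s) x) (D₂ (D₁ y)) (A.pα (k + s) z)
          = D₂ (D₁ (A.tr x y z)) := by
        rw [hsk x, hsk z, sg_add, mul_smul,
          (h₂.2.2 i (j + a) m _ _ _ hxk (h₁.1 j y hy) hzk).2.1, ← map_smul,
          (h₁.2.2 i j m x y z hx hy hz).2.1]
      simp only [scomm, LinearMap.sub_apply, LinearMap.smul_apply, LinearMap.coe_comp,
        Function.comp_apply, map_sub, map_smul, smul_sub]
      rw [smul_comm (sg K (a + b) i) (sg K a b), e1, e2]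
    · have e1 : sg K (a + b) (i + j) • A.tr (A.pα (k + s) x) (A.pα (k + s) y) (D₁ (D₂ z))
          = D₁ (D₂ (A.tr x y z)) := by
        rw [hks x, hks y, sg_add, mul_comm (sg K a (i + j)) (sg K b (i + j)), mul_smul,
          (h₁.2.2 i j (m + b) _ _ _ hxs hys (h₂.1 m z hz)).2.2, ← map_smul,
          (h₂.2.2 i j m x y z hx hy hz).2.2]
      have e2 : sg K (a + b) (i + j) • A.tr (A.pα (k + s) x) (A.pα (k + s) y) (D₂ (D₁ z))
          = D₂ (D₁ (A.tr x y z)) := by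
        rw [hsk x, hsk y, sg_add, mul_smul,
          (h₂.2.2 i j (m + a) _ _ _ hxk hyk (h₁.1 m z hz)).2.2, ← map_smul,
          (h₁.2.2 i j m x y z hx hy hz).2.2]
      simp only [scomm, LinearMap.sub_apply, LinearMap.smul_apply, LinearMap.coe_comp,
        Function.comp_apply, map_sub, map_smul, smul_sub]
      rw [smul_comm (sg K (a + b) (i + j)) (sg K a b), e1, e2]
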